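/- Let M be an R-module, endow Spec^s(M) with the second classical Zariski topology, let Y ⊆ Spec^s(M), and let T(Y) = Σ_{S ∈ Y} S be the submodule of M generated by the members of Y. (a) If Y is an irreducible subset of Spec^s(M), then T(Y) is a second submodule of M. (b) If T(Y) is a second submodule of M and T(Y) belongs to the closure of Y, then Y is irreducible. -/

import Mathlib

open Pointwise

variable (R M : Type*) [CommRing R] [AddCommGroup M] [Module R M]

/-- A nonzero submodule `S` is *second* if for every `r : R`, `r • S = S` or `r • S = ⊥`. -/
def IsSecondSubmodule (S : Submodule R M) : Prop :=
  S ≠ ⊥ ∧ ∀ r : R, r • S = S ∨ r • S = ⊥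

/-- The second spectrum of `M`: the collection of all second submodules of `M`. -/
def SecondSpec : Type _ := {S : Submodule R M // IsSecondSubmodule R M S}

/-- `V^{s*}(N)`: the set of second submodules contained in `N`. -/
def Vs (N : Submodule R M) : Set (SecondSpec R M) := {S | S.1 ≤ N}

/-- `W^s(N)`: the complement of `V^{s*}(N)` in `Spec^s(M)`. -/
def Ws (N : Submodule R M) : Set (SecondSpec R M) := (Vs R M N)ᶜ

/-- The second classical Zariski topology on `Spec^s(M)`, generated by the
sub-basis `{W^s(N) : N ≤ M}`. -/
instance secondZariski : TopologicalSpace (SecondSpec R M) :=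
  TopologicalSpace.generateFrom {U | ∃ N : Submodule R M, U = Ws R M N}

/-- The second socle of a submodule `N`: the sum of all second submodules of `M`
contained in `N`. -/
def secSocle (N : Submodule R M) : Submodule R M :=
  sSup {S : Submodule R M | IsSecondSubmodule R M S ∧ S ≤ N}

/-! For `r : R`, a second submodule `S ≤ T(Y)` satisfies `S = r • S ≤ r • T(Y)` or `r • S = 0`,
so `Y` is covered by the closed sets `V^{s*}(r • T(Y))` and `V^{s*}(ker r)`. Irreducibility puts
`Y` inside one of them, which gives `r • T(Y) = T(Y)` or `r • T(Y) = 0`.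

Conversely, every `W^s(N)` is upward closed, so `S ≤ S'` makes `S` a specialization of `S'`.
Hence a point `T(Y)` of the closure of `Y` lying above every member of `Y` is a generic point of
that closure, which is therefore irreducible. -/

theorem TopologicalSpace.specializes_generateFrom_iff {α : Type*} {g : Set (Set α)} {x y : α} :
    @Specializes α (generateFrom g) x y ↔ ∀ s ∈ g, y ∈ s → x ∈ s := by
  let := generateFrom g
  exact specializes_iff_pure.trans (Filter.tendsto_id'.symm.trans tendsto_nhds_generateFrom_iff)

theorem isIrreducible_of_mem_closure_of_forall_specializes {X : Type*} [TopologicalSpace X]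
    {x : X} {Y : Set X} (hx : x ∈ closure Y) (hY : ∀ y ∈ Y, x ⤳ y) : IsIrreducible Y := by
  have hgen : IsGenericPoint x (closure Y) := isGenericPoint_def.mpr <|
    (closure_minimal (Set.singleton_subset_iff.mpr hx) isClosed_closure).antisymm
      (closure_minimal (fun y hy => specializes_iff_mem_closure.mp (hY y hy)) isClosed_closure)
  exact isIrreducible_iff_closure.mp hgen.isIrreducible

variable {R M}

theorem isClosed_Vs (N : Submodule R M) : IsClosed (Vs R M N) :=
  isOpen_compl_iff.mp (TopologicalSpace.isOpen_generateFrom_of_mem ⟨N, rfl⟩)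

theorem SecondSpec.specializes_of_le {A B : SecondSpec R M} (h : A.1 ≤ B.1) : B ⤳ A :=
  TopologicalSpace.specializes_generateFrom_iff.mpr <| by
    rintro _ ⟨N, rfl⟩ hA hB
    exact hA (h.trans hB)

theorem sSup_image_val_le_iff {Y : Set (SecondSpec R M)} {N : Submodule R M} :
    sSup (Subtype.val '' Y) ≤ N ↔ Y ⊆ Vs R M N := by
  refine sSup_le_iff.trans ⟨fun h A hA => h _ ⟨A, hA, rfl⟩, ?_⟩
  rintro h _ ⟨A, hA, rfl⟩
  exact h hA

theorem IsSecondSubmodule.le_smul_or_le_ker {S N : Submodule R M} (hS : IsSecondSubmodule R M S)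
    (hSN : S ≤ N) (r : R) : S ≤ r • N ∨ S ≤ LinearMap.ker (DistribSMul.toLinearMap R M r) :=
  (hS.2 r).imp (fun h => h.ge.trans (Submodule.map_mono hSN)) LinearMap.le_ker_iff_map.mpr

theorem isSecondSubmodule_sSup_of_isIrreducible {Y : Set (SecondSpec R M)} (hY : IsIrreducible Y) :
    IsSecondSubmodule R M (sSup (Subtype.val '' Y)) := by
  set T := sSup (Subtype.val '' Y)
  have le_T : ∀ A ∈ Y, A.1 ≤ T := fun A hA => le_sSup ⟨A, hA, rfl⟩
  obtain ⟨⟨A, hA⟩, hY⟩ := hY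
  refine ⟨fun hT => A.2.1 (le_bot_iff.mp (hT ▸ le_T A hA)), fun r => ?_⟩
  have cover : Y ⊆ Vs R M (r • T) ∪ Vs R M (LinearMap.ker (DistribSMul.toLinearMap R M r)) :=
    fun B hB => B.2.le_smul_or_le_ker (le_T B hB) r
  rcases isPreirreducible_iff_isClosed_union_isClosed.mp hY _ _ (isClosed_Vs _) (isClosed_Vs _)
    cover with h | h
  · exact Or.inl ((Submodule.smul_le_self_of_tower r T).antisymm (sSup_image_val_le_iff.mpr h))
  · exact Or.inr (LinearMap.le_ker_iff_map.mp (sSup_image_val_le_iff.mpr h))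

/-- Thm 2.25: for `Y ⊆ Spec^s(M)` and `T(Y) = Σ_{S ∈ Y} S`:
(a) if `Y` is irreducible then `T(Y)` is a second submodule;
(b) if `T(Y)` is second and `T(Y) ∈ cl(Y)`, then `Y` is irreducible. -/
theorem stmt14 (Y : Set (SecondSpec R M)) :
    (IsIrreducible Y → IsSecondSubmodule R M (sSup (Subtype.val '' Y))) ∧
      (∀ h : IsSecondSubmodule R M (sSup (Subtype.val '' Y)),
        (⟨sSup (Subtype.val '' Y), h⟩ : SecondSpec R M) ∈ closure Y →
          IsIrreducible Y) :=
  ⟨isSecondSubmodule_sSup_of_isIrreducible, fun _ hT =>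
    isIrreducible_of_mem_closure_of_forall_specializes hT fun A hA =>
      SecondSpec.specializes_of_le (le_sSup ⟨A, hA, rfl⟩)⟩
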